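/- Let G be a finite abelian group whose Sylow 2-subgroup is P = ⟨a₁⟩ × ⋯ × ⟨aₙ⟩ with each aᵢ of order 2^{mᵢ} > 1, and let H be a subgroup of G such that H ∩ P is cyclic. Then H is a perfect code of G if and only if either H ∩ P is trivial or the projection of H ∩ P onto ⟨aᵢ⟩ is surjective for some i. -/
import Mathlib

/-- `H` is a subgroup perfect code of `G`: `H` is a perfect code in some Cayley graph of
`G`, equivalently there is an inverse-closed left transversal of `H` in `G` containing
the identity. -/
def IsSubgroupPerfectCode {G : Type*} [Group G] (H : Subgroup G) : Prop :=
  ∃ L : Set G, L⁻¹ = L ∧ (1 : G) ∈ L ∧ Subgroup.IsComplement L (H : Set G)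

/-- `H` is a subgroup total perfect code of `G`: `H` is a total perfect code in some Cayley
graph of `G`, equivalently there is an inverse-closed subset of `G \ {e}` that is a left
transversal of `H` in `G`. -/
def IsSubgroupTotalPerfectCode {G : Type*} [Group G] (H : Subgroup G) : Prop :=
  ∃ S : Set G, S⁻¹ = S ∧ (1 : G) ∉ S ∧ Subgroup.IsComplement S (H : Set G)

open Subgroup

lemma zpow_pow_comm' {G : Type*} [Group G] (u : G) (c : ℤ) (n : ℕ) :
    (u ^ c) ^ n = (u ^ n) ^ c := by
  rw [← zpow_natCast (u ^ c), ← zpow_mul, ← zpow_natCast u, ← zpow_mul, mul_comm]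



lemma sq_of_code {G : Type*} [CommGroup G] (H : Subgroup G)
    (hc : IsSubgroupPerfectCode H) : ∀ g : G, g ^ 2 ∈ H → ∃ h ∈ H, (g * h) ^ 2 = 1 := by
  obtain ⟨L, hLinv, hL1, hLc⟩ := hc
  intro g hg
  obtain ⟨⟨⟨l, hl⟩, ⟨h, hh⟩⟩, hprod, -⟩ := hLc.existsUnique g
  simp only at hprod
  have hl2 : l ^ 2 ∈ H := by
    have : l ^ 2 = g ^ 2 * (h⁻¹) ^ 2 := by
      rw [← hprod, mul_pow, inv_pow, mul_inv_cancel_right]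
    rw [this]
    exact H.mul_mem hg (H.pow_mem (H.inv_mem hh) 2)
  have hlinv : l⁻¹ ∈ L := by
    rw [← hLinv]
    simpa using hl
  have hinvsq : l⁻¹ * l⁻¹ ∈ H := by
    have : l⁻¹ * l⁻¹ = (l ^ 2)⁻¹ := by group
    rw [this]; exact H.inv_mem hl2
  obtain ⟨x, -, hxuniq⟩ := hLc.existsUnique l⁻¹
  have e1 : ((⟨l⁻¹, hlinv⟩, ⟨1, H.one_mem⟩) : L × (H : Set G)) = x :=
    hxuniq _ (by simp)
  have e2 : ((⟨l, hl⟩, ⟨l⁻¹ * l⁻¹, hinvsq⟩) : L × (H : Set G)) = x :=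
    hxuniq _ (by simp)
  have e3 : l⁻¹ = l := congrArg (fun y => (y.1 : G)) (e1.trans e2.symm)
  refine ⟨h⁻¹, H.inv_mem hh, ?_⟩
  have : g * h⁻¹ = l := by rw [← hprod, mul_inv_cancel_right]
  rw [this, sq]
  nth_rewrite 2 [← e3]
  exact mul_inv_cancel l

lemma code_of_sq {G : Type*} [CommGroup G] (H : Subgroup G)
    (hH : ∀ g : G, g ^ 2 ∈ H → ∃ h ∈ H, (g * h) ^ 2 = 1) : IsSubgroupPerfectCode H := by
  classical
  have hinv : ∀ C : G ⧸ H, C⁻¹ = C → ∃ g : G, QuotientGroup.mk g = C ∧ g * g = 1 := by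
    intro C hC
    have hsq : (Quotient.out C) ^ 2 ∈ H := by
      rw [← QuotientGroup.eq_one_iff, QuotientGroup.mk_pow, QuotientGroup.out_eq', sq]
      nth_rewrite 1 [← hC]
      exact inv_mul_cancel C
    obtain ⟨h, hh, h1⟩ := hH _ hsq
    refine ⟨Quotient.out C * h, ?_, by rw [← sq]; exact h1⟩
    rw [QuotientGroup.mk_mul, (QuotientGroup.eq_one_iff h).mpr hh, mul_one,
      QuotientGroup.out_eq']
  choose w hw1 hw2 using hinv
  set r : (G ⧸ H) → (G ⧸ H) → Prop := WellOrderingRel with hr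
  haveI : IsWellOrder (G ⧸ H) r := WellOrderingRel.isWellOrder
  set s : G ⧸ H → G := fun C =>
    if h1 : C = 1 then 1
    else if h2 : C⁻¹ = C then w C h2
    else if r C C⁻¹ then Quotient.out C else (Quotient.out (C⁻¹ : G ⧸ H))⁻¹ with hs
  have sEq1 : s 1 = 1 := by rw [hs]; simp
  have sEq2 : ∀ C (h1 : ¬ C = 1) (h2 : C⁻¹ = C), s C = w C h2 := by
    intro C h1 h2; rw [hs]; simp only; rw [dif_neg h1, dif_pos h2]
  have sEq3 : ∀ C, ¬ C = 1 → ¬ C⁻¹ = C → r C C⁻¹ → s C = Quotient.out C := by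
    intro C h1 h2 h3; rw [hs]; simp only; rw [dif_neg h1, dif_neg h2, if_pos h3]
  have sEq4 : ∀ C, ¬ C = 1 → ¬ C⁻¹ = C → ¬ r C C⁻¹ →
      s C = (Quotient.out (C⁻¹ : G ⧸ H))⁻¹ := by
    intro C h1 h2 h3; rw [hs]; simp only; rw [dif_neg h1, dif_neg h2, if_neg h3]
  have P1 : ∀ C, (QuotientGroup.mk (s C) : G ⧸ H) = C := by
    intro C
    by_cases h1 : C = 1
    · rw [h1, sEq1]; rfl
    by_cases h2 : C⁻¹ = C
    · rw [sEq2 C h1 h2]; exact hw1 C h2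
    by_cases h3 : r C C⁻¹
    · rw [sEq3 C h1 h2 h3, QuotientGroup.out_eq']
    · rw [sEq4 C h1 h2 h3, QuotientGroup.mk_inv, QuotientGroup.out_eq', inv_inv]
  have P3 : ∀ C, s C⁻¹ = (s C)⁻¹ := by
    intro C
    by_cases h1 : C = 1
    · subst h1; rw [inv_one, sEq1, inv_one]
    by_cases h2 : C⁻¹ = C
    · rw [h2, sEq2 C h1 h2]
      exact (inv_eq_of_mul_eq_one_right (hw2 C h2)).symm
    · have h1' : ¬ C⁻¹ = 1 := fun h => h1 (by rw [← inv_inv C, h, inv_one])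
      have h2' : ¬ (C⁻¹)⁻¹ = C⁻¹ := by rw [inv_inv]; exact fun h => h2 h.symm
      rcases trichotomous_of r C C⁻¹ with h3 | h3 | h3
      · have h3' : ¬ r C⁻¹ (C⁻¹)⁻¹ := by
          rw [inv_inv]
          exact fun hcon => (irrefl_of r C) (trans_of r h3 hcon)
        rw [sEq4 C⁻¹ h1' h2' h3', sEq3 C h1 h2 h3, inv_inv]
      · exact absurd h3.symm h2
      · have h3' : ¬ r C C⁻¹ := fun hcon => (irrefl_of r C) (trans_of r hcon h3)
        have h3'' : r C⁻¹ (C⁻¹)⁻¹ := by rw [inv_inv]; exact h3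
        rw [sEq3 C⁻¹ h1' h2' h3'', sEq4 C h1 h2 h3', inv_inv]
  refine ⟨Set.range s, ?_, ⟨1, sEq1⟩, ?_⟩
  · ext x
    simp only [Set.mem_inv, Set.mem_range]
    constructor
    · rintro ⟨C, hC⟩
      exact ⟨C⁻¹, by rw [P3, hC, inv_inv]⟩
    · rintro ⟨C, hC⟩
      exact ⟨C⁻¹, by rw [P3, hC]⟩
  · rw [Subgroup.isComplement_iff_existsUnique]
    intro g
    have hmem : (s (QuotientGroup.mk g))⁻¹ * g ∈ H := by
      rw [← QuotientGroup.eq]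
      exact P1 _
    refine ⟨(⟨s (QuotientGroup.mk g), Set.mem_range_self _⟩, ⟨_, hmem⟩), by simp, ?_⟩
    rintro ⟨⟨l, hl⟩, ⟨h, hh⟩⟩ heq
    simp only at heq
    obtain ⟨C, hC⟩ := hl
    have hCg : (QuotientGroup.mk g : G ⧸ H) = C := by
      rw [← heq, QuotientGroup.mk_mul, (QuotientGroup.eq_one_iff h).mpr hh, mul_one,
        ← hC, P1]
    have hleq : l = s (QuotientGroup.mk g) := by rw [hCg, hC]
    have h2eq : h = (s (QuotientGroup.mk g))⁻¹ * g := by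
      rw [← hleq, ← heq, inv_mul_cancel_left]
    exact Prod.ext (Subtype.ext hleq) (Subtype.ext h2eq)

lemma bezout_odd {d : ℕ} (hd : ¬ 2 ∣ d) (e : ℕ) :
    ∃ t s : ℤ, (d : ℤ) * t + 2 ^ e * s = 1 := by
  have h1 : Nat.Coprime 2 d := (Nat.Prime.coprime_iff_not_dvd Nat.prime_two).mpr hd
  have h2 : Nat.Coprime (2 ^ e) d := Nat.Coprime.pow_left e h1
  have h3 : IsCoprime ((2 ^ e : ℕ) : ℤ) ((d : ℕ) : ℤ) := by
    rw [Int.isCoprime_iff_gcd_eq_one, Int.gcd_natCast_natCast]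
    exact h2
  obtain ⟨u, v, huv⟩ := h3
  refine ⟨v, u, ?_⟩
  push_cast at huv ⊢
  linarith

lemma mem_sylow_two {G : Type*} [CommGroup G] [Fintype G] (P : Sylow 2 G) {x : G} {e : ℕ}
    (hx : x ^ (2 ^ e) = 1) : x ∈ P.toSubgroup := by
  haveI : Fact (Nat.Prime 2) := ⟨Nat.prime_two⟩
  have hpg : IsPGroup 2 (zpowers x) := by
    rintro ⟨y, hy⟩
    obtain ⟨c, hc⟩ := mem_zpowers_iff.mp hy
    refine ⟨e, ?_⟩
    have : y ^ (2 ^ e) = 1 := by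
      rw [← hc, ← zpow_natCast, ← zpow_mul, mul_comm, zpow_mul, zpow_natCast, hx, one_zpow]
    exact Subtype.ext (by simpa using this)
  obtain ⟨R, hR⟩ := hpg.exists_le_sylow
  haveI := Sylow.unique_of_normal R inferInstance
  have hRP : R = P := Subsingleton.elim R P
  exact hRP ▸ hR (mem_zpowers x)

lemma sq_reduction {G : Type*} [CommGroup G] [Fintype G] (P : Sylow 2 G) (H : Subgroup G) :
    (∀ g : G, g ^ 2 ∈ H → ∃ h ∈ H, (g * h) ^ 2 = 1) ↔
      (∀ x ∈ H ⊓ P.toSubgroup, (∃ p ∈ P.toSubgroup, p ^ 2 = x) →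
        ∃ y ∈ H ⊓ P.toSubgroup, y ^ 2 = x) := by
  classical
  haveI : Fact (Nat.Prime 2) := ⟨Nat.prime_two⟩
  set N := Nat.card G with hNdef
  have hN0 : N ≠ 0 := Nat.card_pos.ne'
  set e := N.factorization 2 with hedef
  set d := N / 2 ^ e with hddef
  have hed : 2 ^ e * d = N := Nat.ordProj_mul_ordCompl_eq_self N 2
  have hd : ¬ 2 ∣ d := Nat.not_dvd_ordCompl Nat.prime_two hN0
  obtain ⟨t, s, hts⟩ := bezout_odd hd e
  have hcard : ∀ u : G, u ^ (N : ℤ) = 1 := fun u => by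
    rw [zpow_natCast]; exact pow_card_eq_one'
  have hNZ : ((2 : ℤ) ^ e) * (d : ℤ) = (N : ℤ) := by exact_mod_cast hed
  -- (u^(d*t)) is a 2-element
  have key2 : ∀ u : G, (u ^ ((d : ℤ) * t)) ^ (2 ^ e) = 1 := by
    intro u
    rw [← zpow_natCast (u ^ ((d : ℤ) * t)), ← zpow_mul]
    have he : (d : ℤ) * t * ((2 ^ e : ℕ) : ℤ) = (N : ℤ) * t := by
      push_cast
      rw [← hNZ]; ring
    rw [he, zpow_mul, hcard, one_zpow]
  -- x ∈ P implies x ^ 2^e = 1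
  have hPord : ∀ x ∈ P.toSubgroup, x ^ (2 ^ e) = 1 := by
    intro x hx
    have hcardP : Nat.card P.toSubgroup = 2 ^ e := P.card_eq_multiplicity
    have : (⟨x, hx⟩ : P.toSubgroup) ^ (2 ^ e) = 1 := by
      rw [← hcardP]; exact pow_card_eq_one'
    simpa using congrArg (Subtype.val) this
  constructor
  · -- forward
    intro hyp x hx hsq
    obtain ⟨p, hpP, hp2⟩ := hsq
    have hp2H : p ^ 2 ∈ H := hp2 ▸ hx.1
    obtain ⟨h, hh, hph⟩ := hyp p hp2H
    -- (p*h)^2 = 1 means h^2 = x⁻¹ ; u := h⁻¹ has u^2 = x, u ∈ H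
    have hu2 : (h⁻¹) ^ 2 = x := by
      have : p ^ 2 * h ^ 2 = 1 := by rw [← mul_pow]; exact hph
      rw [hp2] at this
      rw [inv_pow]
      exact inv_eq_of_mul_eq_one_left this
    set u := h⁻¹ with hudef
    have huH : u ∈ H := H.inv_mem hh
    refine ⟨u ^ ((d : ℤ) * t), ⟨H.zpow_mem huH _, mem_sylow_two P (key2 u)⟩, ?_⟩
    -- (u^(dt))^2 = u^(2dt) = x^(dt) = x
    have e1 : (u ^ ((d : ℤ) * t)) ^ 2 = x ^ ((d : ℤ) * t) := by
      rw [← hu2, ← zpow_natCast (u ^ ((d : ℤ) * t)), ← zpow_mul, ← zpow_natCast u, ← zpow_mul]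
      ring_nf
    rw [e1]
    -- x^(dt) = x since x^(2^e) = 1 and dt = 1 - 2^e s
    have hx2e : x ^ ((2 : ℤ) ^ e * s) = 1 := by
      have : x ^ ((2 : ℤ) ^ e) = 1 := by
        have := hPord x hx.2
        rw [← zpow_natCast x] at this
        simpa using this
      rw [zpow_mul, this, one_zpow]
    calc x ^ ((d : ℤ) * t) = x ^ ((d : ℤ) * t) * x ^ ((2 : ℤ) ^ e * s) := by rw [hx2e, mul_one]
      _ = x ^ ((d : ℤ) * t + (2 : ℤ) ^ e * s) := (zpow_add x _ _).symm
      _ = x ^ (1 : ℤ) := by rw [hts]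
      _ = x := zpow_one x
  · -- backward
    intro hyp g hg
    set x := g ^ 2 with hxdef
    have hxH : x ∈ H := hg
    -- 2-part of x
    set x2 := x ^ ((d : ℤ) * t) with hx2def
    have hx2H : x2 ∈ H := H.zpow_mem hxH _
    have hx2P : x2 ∈ P.toSubgroup := mem_sylow_two P (key2 x)
    have hgdtP : g ^ ((d : ℤ) * t) ∈ P.toSubgroup := mem_sylow_two P (key2 g)
    have hx2sq : (g ^ ((d : ℤ) * t)) ^ 2 = x2 := by
      rw [hx2def, hxdef, ← zpow_natCast (g ^ ((d : ℤ) * t)), ← zpow_mul,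
        ← zpow_natCast g, ← zpow_mul]
      ring_nf
    obtain ⟨y, hy, hy2⟩ := hyp x2 ⟨hx2H, hx2P⟩ ⟨g ^ ((d : ℤ) * t), hgdtP, hx2sq⟩
    -- odd part of x
    set x2' := x ^ ((2 : ℤ) ^ e * s) with hx2'def
    have hx2'H : x2' ∈ H := H.zpow_mem hxH _
    have hx2'd : x2' ^ (d : ℤ) = 1 := by
      rw [hx2'def, ← zpow_mul]
      have : (2 : ℤ) ^ e * s * (d : ℤ) = (N : ℤ) * s := by rw [← hNZ]; ring
      rw [this, zpow_mul, hcard, one_zpow]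
    obtain ⟨rr, hrr⟩ : ∃ rr, d = 2 * rr + 1 := by
      rcases Nat.even_or_odd d with he' | ho'
      · exact absurd he'.two_dvd hd
      · exact ho'
    set z := x2' ^ ((rr : ℤ) + 1) with hzdef
    have hzH : z ∈ H := H.zpow_mem hx2'H _
    have hz2 : z ^ 2 = x2' := by
      rw [hzdef, ← zpow_natCast (x2' ^ ((rr : ℤ) + 1)), ← zpow_mul]
      have : ((rr : ℤ) + 1) * ((2 : ℕ) : ℤ) = (d : ℤ) + 1 := by
        rw [hrr]; push_cast; ring
      rw [this, zpow_add, hx2'd, one_mul, zpow_one]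
    -- u := y * z satisfies u ∈ H, u^2 = x
    have hu2 : (y * z) ^ 2 = x := by
      rw [mul_pow, hy2, hz2, hx2def, hx2'def, ← zpow_add]
      rw [hts, zpow_one]
    refine ⟨(y * z)⁻¹, H.inv_mem (H.mul_mem hy.1 hzH), ?_⟩
    rw [mul_pow, inv_pow, hu2, ← hxdef]
    exact mul_inv_cancel x

lemma odd_zpow_ne_one {G : Type*} [Group G] {b : G} {m : ℕ} (hm : 1 ≤ m)
    (hb : orderOf b = 2 ^ m) {j : ℤ} (hj : Odd j) : b ^ j ≠ 1 := by
  intro h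
  have hdvd : ((orderOf b : ℕ) : ℤ) ∣ j := orderOf_dvd_iff_zpow_eq_one.mpr h
  rw [hb] at hdvd
  have h2 : (2 : ℤ) ∣ j := by
    refine dvd_trans ?_ hdvd
    have : ((2 ^ m : ℕ) : ℤ) = (2 : ℤ) ^ m := by push_cast; ring
    rw [this]
    exact dvd_pow_self 2 (by omega)
  obtain ⟨c, hc⟩ := h2
  exact (Int.not_even_iff_odd.mpr hj) ⟨c, by omega⟩

lemma int_bezout_odd {j : ℤ} (hj : Odd j) (m : ℕ) :
    ∃ u v : ℤ, j * u + 2 ^ m * v = 1 := by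
  obtain ⟨k, hk⟩ := hj
  have hco : IsCoprime j (2 : ℤ) := ⟨1, -k, by rw [hk]; ring⟩
  obtain ⟨u, v, huv⟩ := hco.pow_right (n := m)
  exact ⟨u, v, by linarith⟩

lemma gen_of_odd {G : Type*} [Group G] {b : G} {m : ℕ} (hb : orderOf b = 2 ^ m)
    {j : ℤ} (hj : Odd j) {z : G} (hz : z ∈ zpowers b) : ∃ c : ℤ, (b ^ j) ^ c = z := by
  obtain ⟨u, v, huv⟩ := int_bezout_odd hj m
  have hbord : b ^ ((2 : ℤ) ^ m) = 1 := by
    have := pow_orderOf_eq_one b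
    rw [hb] at this
    rw [← zpow_natCast b] at this
    simpa using this
  have hbj : (b ^ j) ^ u = b := by
    rw [← zpow_mul]
    have : j * u = 1 - 2 ^ m * v := by linarith
    rw [this, zpow_sub, zpow_one, zpow_mul, hbord, one_zpow, inv_one, mul_one]
  obtain ⟨c0, hc0⟩ := mem_zpowers_iff.mp hz
  exact ⟨u * c0, by rw [zpow_mul, hbj, hc0]⟩

lemma not_sq_of_odd {G : Type*} [Group G] {b : G} {m : ℕ} (hm : 1 ≤ m)
    (hb : orderOf b = 2 ^ m) {j : ℤ} (hj : Odd j) :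
    ¬ ∃ x ∈ zpowers b, x ^ 2 = b ^ j := by
  rintro ⟨x, hx, hx2⟩
  obtain ⟨s, hs⟩ := mem_zpowers_iff.mp hx
  have h1 : b ^ (s * 2) = b ^ j := by
    rw [zpow_mul, show (2 : ℤ) = ((2 : ℕ) : ℤ) from rfl, zpow_natCast, hs, hx2]
  have : b ^ (s * 2 - j) = 1 := by
    rw [zpow_sub, h1, mul_inv_cancel]
  exact odd_zpow_ne_one hm hb (by
    obtain ⟨k, hk⟩ := hj
    exact ⟨s - k - 1, by rw [hk]; ring⟩) this

lemma not_gen_of_even {G : Type*} [Group G] {b : G} {m : ℕ} (hm : 1 ≤ m)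
    (hb : orderOf b = 2 ^ m) {j : ℤ} (hj : Even j) :
    ¬ (∀ z ∈ zpowers b, ∃ c : ℤ, (b ^ j) ^ c = z) := by
  intro hgen
  obtain ⟨c, hc⟩ := hgen b (mem_zpowers b)
  rw [← zpow_mul] at hc
  have : b ^ (j * c - 1) = 1 := by rw [zpow_sub, zpow_one, hc, mul_inv_cancel]
  obtain ⟨k, hk⟩ := hj
  exact odd_zpow_ne_one hm hb ⟨k * c - 1, by rw [hk]; ring⟩ this

lemma sq_of_even {G : Type*} [Group G] {b : G} {j : ℤ} (hj : Even j) :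
    ∃ x ∈ zpowers b, x ^ 2 = b ^ j := by
  obtain ⟨k, hk⟩ := hj
  refine ⟨b ^ k, zpow_mem (mem_zpowers b) k, ?_⟩
  rw [← zpow_natCast (b ^ k), ← zpow_mul, hk]
  norm_num
  ring_nf

/-- Let G be a finite abelian group whose Sylow 2-subgroup P is the internal direct
product of cyclic subgroups ⟨a i⟩ of order 2^(m i) > 1, and let H be a subgroup of G with
H ∩ P cyclic. Then H is a perfect code of G iff either H ∩ P is trivial or H ∩ P projects
onto ⟨a i⟩ for some i. -/
theorem abelian_perfect_code_iff_projects {G : Type*} [CommGroup G] [Fintype G]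
    (P : Sylow 2 G) (n : ℕ) (a : Fin n → G) (m : Fin n → ℕ) (hm : ∀ i, 1 ≤ m i)
    (ho : ∀ i, orderOf (a i) = 2 ^ m i)
    (f : (∀ i, Subgroup.zpowers (a i)) ≃* P.toSubgroup)
    (hf : ∀ x : ∀ i, Subgroup.zpowers (a i), ((f x : P.toSubgroup) : G) = ∏ i, (x i : G))
    (H : Subgroup G) (hcyc : IsCyclic ↥(H ⊓ P.toSubgroup)) :
    IsSubgroupPerfectCode H ↔
      (H ⊓ P.toSubgroup = ⊥ ∨
        ∃ i, ∀ y : Subgroup.zpowers (a i),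
          ∃ p : P.toSubgroup, (p : G) ∈ H ∧ f.symm p i = y) := by
  classical
  haveI : Fact (Nat.Prime 2) := ⟨Nat.prime_two⟩
  obtain ⟨g0, hgen⟩ := hcyc.exists_generator
  set q : G := (g0 : G) with hqdef
  have hqHP : q ∈ H ⊓ P.toSubgroup := g0.2
  have hqH : q ∈ H := hqHP.1
  have hqP : q ∈ P.toSubgroup := hqHP.2
  have hQ : H ⊓ P.toSubgroup = zpowers q := by
    ext x
    constructor
    · intro hx
      obtain ⟨c, hc⟩ := mem_zpowers_iff.mp (hgen ⟨x, hx⟩)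
      refine mem_zpowers_iff.mpr ⟨c, ?_⟩
      simpa using congrArg (Subtype.val) hc
    · intro hx
      obtain ⟨c, hc⟩ := mem_zpowers_iff.mp hx
      rw [← hc]
      exact zpow_mem hqHP c
  obtain ⟨k, hk⟩ : ∃ k, orderOf q = 2 ^ k := by
    obtain ⟨k, hk⟩ := IsPGroup.iff_orderOf.mp P.isPGroup' ⟨q, hqP⟩
    exact ⟨k, by rwa [Subgroup.orderOf_mk] at hk⟩
  set w : ∀ i, ↥(Subgroup.zpowers (a i)) := f.symm ⟨q, hqP⟩ with hwdef
  -- claim D : q is a square in P iff each coordinate is a square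
  have claimD : (∃ p ∈ P.toSubgroup, p ^ 2 = q) ↔
      (∀ i, ∃ x ∈ zpowers (a i), x ^ 2 = ((w i : G))) := by
    constructor
    · rintro ⟨p, hpP, hp2⟩ i
      refine ⟨((f.symm ⟨p, hpP⟩) i : G), ((f.symm ⟨p, hpP⟩) i).2, ?_⟩
      have h1 : (f.symm ⟨p, hpP⟩) ^ 2 = w := by
        rw [hwdef, ← map_pow]
        congr 1
        exact Subtype.ext hp2
      have h2 : ((f.symm ⟨p, hpP⟩) i) ^ 2 = w i := by
        rw [← h1]; rfl
      calc ((f.symm ⟨p, hpP⟩) i : G) ^ 2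
          = ((((f.symm ⟨p, hpP⟩) i) ^ 2 : ↥(zpowers (a i))) : G) := by push_cast; rfl
        _ = (w i : G) := by rw [h2]
    · intro hall
      choose xx hxmem hxsq using hall
      set U : ∀ i, ↥(Subgroup.zpowers (a i)) := fun i => ⟨xx i, hxmem i⟩ with hUdef
      have hU2 : U ^ 2 = w := by
        funext i
        exact Subtype.ext (by simpa using hxsq i)
      refine ⟨((f U : ↥P.toSubgroup) : G), (f U).2, ?_⟩
      have hfU : (f U) ^ 2 = ⟨q, hqP⟩ := by
        rw [← map_pow, hU2, hwdef]
        exact f.apply_symm_apply _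
      calc ((f U : ↥P.toSubgroup) : G) ^ 2
          = (((f U) ^ 2 : ↥P.toSubgroup) : G) := by push_cast; rfl
        _ = q := by rw [hfU]
  -- claim E : the projection condition in coordinate i is generation by w i
  have claimE : ∀ i, (∀ y : ↥(Subgroup.zpowers (a i)),
      ∃ p : ↥P.toSubgroup, (p : G) ∈ H ∧ f.symm p i = y)
      ↔ (∀ z ∈ zpowers (a i), ∃ c : ℤ, ((w i : G)) ^ c = z) := by
    intro i
    constructor
    · intro hy z hz
      obtain ⟨p, hpH, hpi⟩ := hy ⟨z, hz⟩
      have hpQ : (p : G) ∈ zpowers q := hQ ▸ (⟨hpH, p.2⟩ : (p : G) ∈ H ⊓ P.toSubgroup)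
      obtain ⟨c, hc⟩ := mem_zpowers_iff.mp hpQ
      have hp' : p = (⟨q, hqP⟩ : ↥P.toSubgroup) ^ c := Subtype.ext (by
        rw [← hc]; push_cast; rfl)
      refine ⟨c, ?_⟩
      have hws : f.symm p i = (w i) ^ c := by
        rw [hp', map_zpow, hwdef]
        rfl
      rw [hws] at hpi
      calc ((w i : G)) ^ c = (((w i) ^ c : ↥(zpowers (a i))) : G) := by push_cast; rfl
        _ = z := by rw [hpi]
    · intro hz y
      obtain ⟨c, hc⟩ := hz (y : G) y.2
      refine ⟨(⟨q, hqP⟩ : ↥P.toSubgroup) ^ c, ?_, ?_⟩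
      · have : ((((⟨q, hqP⟩ : ↥P.toSubgroup)) ^ c : ↥P.toSubgroup) : G) = q ^ c := by
          push_cast; rfl
        rw [this]
        exact H.zpow_mem hqH c
      · rw [map_zpow, ← hwdef]
        refine Subtype.ext ?_
        calc (((w ^ c) i : ↥(zpowers (a i))) : G) = ((w i : G)) ^ c := by push_cast; rfl
          _ = (y : G) := hc
  -- main reduction
  have hmain : IsSubgroupPerfectCode H ↔
      (∀ x ∈ H ⊓ P.toSubgroup, (∃ p ∈ P.toSubgroup, p ^ 2 = x) →
        ∃ y ∈ H ⊓ P.toSubgroup, y ^ 2 = x) := by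
    constructor
    · intro h; exact (sq_reduction P H).mp (sq_of_code H h)
    · intro h; exact code_of_sq H ((sq_reduction P H).mpr h)
  rw [hmain]
  constructor
  · intro Ssq
    by_cases hq1 : q = 1
    · left; rw [hQ]; exact zpowers_eq_bot.mpr hq1
    · right
      have hk1 : 1 ≤ k := by
        by_contra hcon
        have hk0 : k = 0 := by omega
        rw [hk0, pow_zero] at hk
        exact hq1 (orderOf_eq_one_iff.mp hk)
      have hnotsq : ¬ ∃ p ∈ P.toSubgroup, p ^ 2 = q := by
        rintro ⟨p, hpP, hp2⟩
        obtain ⟨y, hy, hy2⟩ := Ssq q hqHP ⟨p, hpP, hp2⟩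
        rw [hQ] at hy
        obtain ⟨s, hs⟩ := mem_zpowers_iff.mp hy
        have h1 : q ^ (s * 2) = q ^ (1 : ℤ) := by
          rw [zpow_mul, show (2 : ℤ) = ((2 : ℕ) : ℤ) from rfl, zpow_natCast, hs, hy2, zpow_one]
        have h2 : q ^ (s * 2 - 1) = 1 := by
          rw [zpow_sub, h1, zpow_one, mul_inv_cancel]
        exact odd_zpow_ne_one hk1 hk ⟨s - 1, by ring⟩ h2
      rw [claimD] at hnotsq
      push_neg at hnotsq
      obtain ⟨i, hi⟩ := hnotsq
      refine ⟨i, (claimE i).mpr ?_⟩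
      obtain ⟨c, hc⟩ := mem_zpowers_iff.mp (w i).2
      rcases Int.even_or_odd c with hev | hod
      · exfalso
        obtain ⟨x, hxmem, hxsq⟩ := sq_of_even (b := a i) hev
        exact hi x hxmem (by rw [hxsq, hc])
      · intro z hz
        rw [← hc]
        exact gen_of_odd (ho i) hod hz
  · rintro (hbot | ⟨i, hi⟩)
    · intro x hx hsq
      rw [hbot, Subgroup.mem_bot] at hx
      exact ⟨1, (H ⊓ P.toSubgroup).one_mem, by rw [one_pow, hx]⟩
    · intro x hx hsqP
      by_cases hq1 : q = 1
      · have hx1 : x = 1 := by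
          rw [hQ, zpowers_eq_bot.mpr hq1, Subgroup.mem_bot] at hx
          exact hx
        exact ⟨1, (H ⊓ P.toSubgroup).one_mem, by rw [one_pow, hx1]⟩
      · have hk1 : 1 ≤ k := by
          by_contra hcon
          have hk0 : k = 0 := by omega
          rw [hk0, pow_zero] at hk
          exact hq1 (orderOf_eq_one_iff.mp hk)
        have hgi := (claimE i).mp hi
        obtain ⟨c, hc⟩ := mem_zpowers_iff.mp (w i).2
        have hodd : Odd c := by
          rcases Int.even_or_odd c with hev | hod
          · exfalso
            apply not_gen_of_even (hm i) (ho i) hev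
            intro z hz
            obtain ⟨cc, hcc⟩ := hgi z hz
            exact ⟨cc, by rw [hc]; exact hcc⟩
          · exact hod
        have hxQ := hx
        rw [hQ] at hxQ
        obtain ⟨j, hj⟩ := mem_zpowers_iff.mp hxQ
        rcases Int.even_or_odd j with hev | hod
        · obtain ⟨jj, hjj⟩ := hev
          refine ⟨q ^ jj, zpow_mem hqHP jj, ?_⟩
          rw [← zpow_natCast (q ^ jj), ← zpow_mul, ← hj, hjj]
          congr 1
          push_cast
          ring
        · exfalso
          obtain ⟨p, hpP, hp2⟩ := hsqP
          obtain ⟨cc, hcc⟩ := gen_of_odd hk hod (mem_zpowers q)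
          rw [hj] at hcc
          have hq_sq : ∃ p' ∈ P.toSubgroup, p' ^ 2 = q := by
            refine ⟨p ^ cc, zpow_mem hpP cc, ?_⟩
            rw [zpow_pow_comm', hp2, hcc]
          rw [claimD] at hq_sq
          obtain ⟨xx, hxxmem, hxxsq⟩ := hq_sq i
          exact not_sq_of_odd (hm i) (ho i) hodd ⟨xx, hxxmem, by rw [hxxsq, ← hc]⟩
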